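/- arXiv:2107.12027 — 9 statements merged into one kernel-verified Lean document; each statement's English description precedes it below -/
import Mathlib

section
/- Let m, q be natural numbers, let F : ℝ^m → ℝ^q be differentiable, and let F̃ : ℝ^m × ℝ^m → ℝ^q be differentiable, symmetric, and consistent with F. Then for every differentiable curve U : ℝ → ℝ^m and every ζ_l ∈ ℝ, the function ζ_r ↦ F̃(U(ζ_l), U(ζ_r)) is differentiable at ζ_r = ζ_l and 2·(d/dζ_r)[F̃(U(ζ_l), U(ζ_r))] evaluated at ζ_r = ζ_l equals (d/dζ)[F(U(ζ))] evaluated at ζ = ζ_l. -/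
/-- For a differentiable `F : ℝ^m → ℝ^q` and a differentiable, symmetric,
consistent two-point function `F̃ : ℝ^m × ℝ^m → ℝ^q`, along any differentiable curve `U`,
the map `ζ_r ↦ F̃(U ζ_l, U ζ_r)` is differentiable at `ζ_l` and twice its derivative there
equals the derivative of `ζ ↦ F (U ζ)` at `ζ_l`. -/
theorem two_point_derivative_identity (m q : ℕ)
    (F : (Fin m → ℝ) → (Fin q → ℝ))
    (Ftil : (Fin m → ℝ) → (Fin m → ℝ) → (Fin q → ℝ))
    (hF : Differentiable ℝ F)
    (hFtil : Differentiable ℝ (fun pr : (Fin m → ℝ) × (Fin m → ℝ) => Ftil pr.1 pr.2))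
    (hsymm : ∀ a b, Ftil a b = Ftil b a)
    (hcons : ∀ a, Ftil a a = F a) :
    ∀ (U : ℝ → Fin m → ℝ), Differentiable ℝ U → ∀ ζl : ℝ,
      DifferentiableAt ℝ (fun ζr => Ftil (U ζl) (U ζr)) ζl ∧
      (2 : ℝ) • deriv (fun ζr => Ftil (U ζl) (U ζr)) ζl
        = deriv (fun ζ => F (U ζ)) ζl := by
  intro U hU ζl
  set Φ : (Fin m → ℝ) × (Fin m → ℝ) → (Fin q → ℝ) := fun pr => Ftil pr.1 pr.2 with hΦ
  set a := U ζl
  set u' := deriv U ζl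
  set L := fderiv ℝ Φ (a, a) with hL
  -- symmetry of L across swap
  have hswap : ∀ x y : Fin m → ℝ, L (x, y) = L (y, x) := by
    intro x y
    have hΦs : Φ = Φ ∘ (Prod.swap : (Fin m → ℝ) × (Fin m → ℝ) → _) := by
      funext p; simp [hΦ, hsymm p.1 p.2]
    have hsw : HasFDerivAt (Prod.swap : (Fin m → ℝ) × (Fin m → ℝ) → _)
        ((ContinuousLinearMap.prod (ContinuousLinearMap.snd ℝ _ _)
          (ContinuousLinearMap.fst ℝ _ _))) (a, a) := by
      exact ((ContinuousLinearMap.prod (ContinuousLinearMap.snd ℝ (Fin m → ℝ) (Fin m → ℝ))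
        (ContinuousLinearMap.fst ℝ (Fin m → ℝ) (Fin m → ℝ)))).hasFDerivAt
    have hcomp : HasFDerivAt Φ
        (L.comp (ContinuousLinearMap.prod (ContinuousLinearMap.snd ℝ _ _)
          (ContinuousLinearMap.fst ℝ _ _))) (a, a) := by
      nth_rewrite 1 [hΦs]
      exact ((hFtil (a, a)).hasFDerivAt).comp (a, a) hsw
    have := hcomp.fderiv
    rw [← hL] at this
    calc L (x, y) = (L.comp (ContinuousLinearMap.prod (ContinuousLinearMap.snd ℝ _ _)
          (ContinuousLinearMap.fst ℝ _ _))) (x, y) := by rw [← this]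
      _ = L (y, x) := rfl
  have hU' : HasDerivAt U u' ζl := (hU ζl).hasDerivAt
  -- derivative of right-slot function
  have h1 : HasDerivAt (fun ζr => Ftil (U ζl) (U ζr)) (L (0, u')) ζl := by
    have hc : HasDerivAt (fun ζ : ℝ => (a, U ζ)) ((0 : Fin m → ℝ), u') ζl :=
      HasDerivAt.prodMk (hasDerivAt_const ζl a) hU'
    exact ((hFtil (a, a)).hasFDerivAt).comp_hasDerivAt ζl hc
  -- derivative of diagonal
  have h2 : HasDerivAt (fun ζ => F (U ζ)) (L (u', u')) ζl := by
    have hc : HasDerivAt (fun ζ : ℝ => (U ζ, U ζ)) (u', u') ζl := HasDerivAt.prodMk hU' hU'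
    have h := ((hFtil (a, a)).hasFDerivAt).comp_hasDerivAt ζl hc
    have heq : (Φ ∘ fun ζ => (U ζ, U ζ)) = fun ζ => F (U ζ) := by
      funext ζ; simp [hΦ, hcons]
    rw [heq] at h; exact h
  refine ⟨h1.differentiableAt, ?_⟩
  rw [h1.deriv, h2.deriv]
  have : L (u', u') = L (0, u') + L (u', 0) := by
    rw [← L.map_add]; norm_num
  rw [this, hswap u' 0, two_smul]
end

section
/- Let f : ℝ → ℝ and F : ℝ^m → ℝ^q be differentiable, let f̃ : ℝ × ℝ → ℝ be differentiable, symmetric and consistent with f, and let F̃ : ℝ^m × ℝ^m → ℝ^q be differentiable, symmetric and consistent with F. Then for every differentiable u : ℝ → ℝ, every differentiable U : ℝ → ℝ^m and every ζ_l ∈ ℝ: 2·(d/dζ_r)[f̃(u(ζ_l), u(ζ_r))·F̃(U(ζ_l), U(ζ_r))] evaluated at ζ_r = ζ_l equals (d/dζ)[f(u(ζ))·F(U(ζ))] evaluated at ζ = ζ_l, where the product is scalar-times-vector. -/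
/-- product rule for two-point functions: with `f̃, F̃` differentiable,
symmetric and consistent with `f, F`, along differentiable curves `u, U`,
`2·(d/dζ_r)[f̃(u ζ_l, u ζ_r) • F̃(U ζ_l, U ζ_r)]` at `ζ_r = ζ_l` equals
`(d/dζ)[f(u ζ) • F(U ζ)]` at `ζ = ζ_l`. -/
theorem two_point_product_derivative_identity (m q : ℕ)
    (f : ℝ → ℝ) (F : (Fin m → ℝ) → (Fin q → ℝ))
    (ftil : ℝ → ℝ → ℝ)
    (Ftil : (Fin m → ℝ) → (Fin m → ℝ) → (Fin q → ℝ))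
    (hf : Differentiable ℝ f)
    (hF : Differentiable ℝ F)
    (hftil : Differentiable ℝ (fun pr : ℝ × ℝ => ftil pr.1 pr.2))
    (hfsymm : ∀ a b, ftil a b = ftil b a)
    (hfcons : ∀ a, ftil a a = f a)
    (hFtil : Differentiable ℝ (fun pr : (Fin m → ℝ) × (Fin m → ℝ) => Ftil pr.1 pr.2))
    (hFsymm : ∀ a b, Ftil a b = Ftil b a)
    (hFcons : ∀ a, Ftil a a = F a) :
    ∀ (u : ℝ → ℝ), Differentiable ℝ u →
    ∀ (U : ℝ → Fin m → ℝ), Differentiable ℝ U → ∀ ζl : ℝ,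
      (2 : ℝ) • deriv (fun ζr => ftil (u ζl) (u ζr) • Ftil (U ζl) (U ζr)) ζl
        = deriv (fun ζ => f (u ζ) • F (U ζ)) ζl := by
  intro u hu U hU ζl
  set φ : ℝ × ℝ → (Fin q → ℝ) :=
    fun p => ftil (u p.1) (u p.2) • Ftil (U p.1) (U p.2) with hφdef
  have hφ : Differentiable ℝ φ := by
    apply Differentiable.fun_smul
    · exact hftil.comp (((hu.comp differentiable_fst).prodMk (hu.comp differentiable_snd)))
    · exact hFtil.comp (((hU.comp differentiable_fst).prodMk (hU.comp differentiable_snd)))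
  set L := fderiv ℝ φ (ζl, ζl) with hL
  have hφd : HasFDerivAt φ L (ζl, ζl) := (hφ (ζl, ζl)).hasFDerivAt
  -- derivative in the second slot
  have h2 : HasDerivAt (fun ζr => φ (ζl, ζr)) (L (0, 1)) ζl := by
    have hin : HasDerivAt (fun ζr : ℝ => ((ζl : ℝ), ζr)) ((0 : ℝ), (1 : ℝ)) ζl :=
      (hasDerivAt_const ζl ζl).prodMk (hasDerivAt_id ζl)
    exact hφd.comp_hasDerivAt ζl hin
  -- derivative in the first slot
  have h1 : HasDerivAt (fun x => φ (x, ζl)) (L (1, 0)) ζl := by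
    set g : ℝ → ℝ × ℝ := fun x => (x, ζl) with hg
    have hin : HasDerivAt g ((1 : ℝ), (0 : ℝ)) ζl :=
      (hasDerivAt_id ζl).prodMk (hasDerivAt_const ζl ζl)
    have hφd' : HasFDerivAt φ L (g ζl) := hφd
    exact hφd'.comp_hasDerivAt ζl hin
  -- symmetry: the two slot functions coincide
  have hsym : (fun ζr => φ (ζl, ζr)) = fun x => φ (x, ζl) := by
    funext x
    simp only [hφdef, hfsymm (u ζl) (u x), hFsymm (U ζl) (U x)]
  have hLeq : L (0, 1) = L (1, 0) := by
    have := h2.deriv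
    rw [hsym] at this
    rw [← this, h1.deriv]
  -- diagonal derivative
  have hdiag : HasDerivAt (fun ζ => φ (ζ, ζ)) (L (1, 1)) ζl := by
    set g : ℝ → ℝ × ℝ := fun ζ => (ζ, ζ) with hg
    have hin : HasDerivAt g ((1 : ℝ), (1 : ℝ)) ζl :=
      (hasDerivAt_id ζl).prodMk (hasDerivAt_id ζl)
    have hφd' : HasFDerivAt φ L (g ζl) := hφd
    exact hφd'.comp_hasDerivAt ζl hin
  have hdiagfun : (fun ζ => φ (ζ, ζ)) = fun ζ => f (u ζ) • F (U ζ) := by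
    funext ζ
    simp only [hφdef, hfcons, hFcons]
  rw [hdiagfun] at hdiag
  have hL2 : L (0, 1) = deriv (fun ζr => ftil (u ζl) (u ζr) • Ftil (U ζl) (U ζr)) ζl :=
    h2.deriv.symm
  rw [hdiag.deriv, ← hL2]
  have : ((1 : ℝ), (1 : ℝ)) = ((0 : ℝ), (1 : ℝ)) + ((1 : ℝ), (0 : ℝ)) := by
    simp
  rw [this, map_add, ← hLeq, two_smul]
end

section
/- Let p ≥ 1 be an integer, α_1, …, α_p ∈ ℝ, let Δξ_1, Δξ_2, Δξ_3 > 0, and let x_1, x_2, x_3 : ℤ³ → ℝ. For k, j ∈ {1,2,3} define the discrete metric M_{kj} : ℤ³ → ℝ by M_{kj} := (1/(Δξ_{k+1}·Δξ_{k+2}))·( δ_{k+2}[ δ_{k+1}[x_{j+1}] · x_{j+2} ] − δ_{k+1}[ δ_{k+2}[x_{j+1}] · x_{j+2} ] ), where all subscripts k+1, k+2, j+1, j+2 are taken cyclically in {1,2,3} and products of grid functions are pointwise. Then the discrete surface conservation laws hold: for every j ∈ {1,2,3} and every i ∈ ℤ³, Σ_{k=1}^3 (1/Δξ_k)·δ_k[M_{kj}]_i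 = 0. -/
/-- The `k`-th standard basis vector of `ℤ³`. -/
def gridE (k : Fin 3) : Fin 3 → ℤ := fun l => if l = k then 1 else 0

/-- The `2p`-th order central difference operator with combination coefficients `α`
in direction `k`, acting on grid functions `a : ℤ³ → ℝ`:
`δ_k[a]_i = (1/2) Σ_{n=1}^p α_n (a_{i+n e_k} − a_{i−n e_k})`. -/
noncomputable def gridCDiff (p : ℕ) (α : ℕ → ℝ) (k : Fin 3)
    (a : (Fin 3 → ℤ) → ℝ) (i : Fin 3 → ℤ) : ℝ :=
  (1 / 2) * ∑ n ∈ Finset.Icc 1 p,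
    α n * (a (i + (n : ℤ) • gridE k) - a (i - (n : ℤ) • gridE k))

lemma gridCDiff_const_mul_sub (p : ℕ) (α : ℕ → ℝ) (k : Fin 3) (c : ℝ)
    (A B : (Fin 3 → ℤ) → ℝ) (i : Fin 3 → ℤ) :
    gridCDiff p α k (fun w => c * (A w - B w)) i
      = c * (gridCDiff p α k A i - gridCDiff p α k B i) := by
  unfold gridCDiff
  simp only [Finset.mul_sum, mul_sub]
  rw [← Finset.sum_sub_distrib]
  exact Finset.sum_congr rfl fun n _ => by ring

lemma gridCDiff_expand (p : ℕ) (α : ℕ → ℝ) (a b : Fin 3)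
    (f : (Fin 3 → ℤ) → ℝ) (i : Fin 3 → ℤ) :
    gridCDiff p α a (fun w => gridCDiff p α b f w) i
      = ∑ n ∈ Finset.Icc 1 p, ∑ m ∈ Finset.Icc 1 p, (1/4) * (α n * α m) *
          (f (i + (n:ℤ) • gridE a + (m:ℤ) • gridE b)
           - f (i + (n:ℤ) • gridE a - (m:ℤ) • gridE b)
           - f (i - (n:ℤ) • gridE a + (m:ℤ) • gridE b)
           + f (i - (n:ℤ) • gridE a - (m:ℤ) • gridE b)) := by
  unfold gridCDiff
  simp only [mul_sub, Finset.mul_sum]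
  refine Finset.sum_congr rfl fun n _ => ?_
  rw [← Finset.sum_sub_distrib]
  exact Finset.sum_congr rfl fun m _ => by ring

lemma gridCDiff_comm (p : ℕ) (α : ℕ → ℝ) (a b : Fin 3)
    (f : (Fin 3 → ℤ) → ℝ) (i : Fin 3 → ℤ) :
    gridCDiff p α a (fun w => gridCDiff p α b f w) i
      = gridCDiff p α b (fun w => gridCDiff p α a f w) i := by
  rw [gridCDiff_expand, gridCDiff_expand, Finset.sum_comm]
  refine Finset.sum_congr rfl fun n _ => Finset.sum_congr rfl fun m _ => ?_
  have h1 : i + (n:ℤ) • gridE b + (m:ℤ) • gridE a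
      = i + (m:ℤ) • gridE a + (n:ℤ) • gridE b := by abel
  have h2 : i + (n:ℤ) • gridE b - (m:ℤ) • gridE a
      = i - (m:ℤ) • gridE a + (n:ℤ) • gridE b := by abel
  have h3 : i - (n:ℤ) • gridE b + (m:ℤ) • gridE a
      = i + (m:ℤ) • gridE a - (n:ℤ) • gridE b := by abel
  have h4 : i - (n:ℤ) • gridE b - (m:ℤ) • gridE a
      = i - (m:ℤ) • gridE a - (n:ℤ) • gridE b := by abel
  rw [h1, h2, h3, h4]
  ring

/-- the conservative-metric-method discretizations `M_{kj}` of the metric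
quantities `J·∂ξ_k/∂x_j` satisfy the discrete surface conservation laws
`Σ_{k=1}^3 (1/Δξ_k)·δ_k[M_{kj}]_i = 0`. -/
theorem discrete_surface_conservation_laws (p : ℕ) (hp : 1 ≤ p) (α : ℕ → ℝ)
    (Δξ : Fin 3 → ℝ) (hΔξ : ∀ k, 0 < Δξ k)
    (x : Fin 3 → (Fin 3 → ℤ) → ℝ)
    (M : Fin 3 → Fin 3 → (Fin 3 → ℤ) → ℝ)
    (hM : ∀ (k j : Fin 3) (i : Fin 3 → ℤ), M k j i =
      (1 / (Δξ (k + 1) * Δξ (k + 2))) *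
        (gridCDiff p α (k + 2)
            (fun w => gridCDiff p α (k + 1) (x (j + 1)) w * x (j + 2) w) i
          - gridCDiff p α (k + 1)
            (fun w => gridCDiff p α (k + 2) (x (j + 1)) w * x (j + 2) w) i)) :
    ∀ (j : Fin 3) (i : Fin 3 → ℤ),
      ∑ k : Fin 3, (1 / Δξ k) * gridCDiff p α k (M k j) i = 0 := by
  intro j i
  set f : Fin 3 → (Fin 3 → ℤ) → ℝ :=
    fun l => fun w => gridCDiff p α l (x (j + 1)) w * x (j + 2) w with hf
  have hMf : ∀ k : Fin 3, M k j = fun w =>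
      (1 / (Δξ (k + 1) * Δξ (k + 2))) *
        (gridCDiff p α (k + 2) (f (k + 1)) w - gridCDiff p α (k + 1) (f (k + 2)) w) :=
    fun k => funext fun w => hM k j w
  rw [Fin.sum_univ_three, hMf 0, hMf 1, hMf 2]
  rw [gridCDiff_const_mul_sub, gridCDiff_const_mul_sub, gridCDiff_const_mul_sub]
  have e01 : (0 : Fin 3) + 1 = 1 := rfl
  have e02 : (0 : Fin 3) + 2 = 2 := rfl
  have e11 : (1 : Fin 3) + 1 = 2 := rfl
  have e12 : (1 : Fin 3) + 2 = 0 := rfl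
  have e21 : (2 : Fin 3) + 1 = 0 := rfl
  have e22 : (2 : Fin 3) + 2 = 1 := rfl
  rw [e01, e02, e11, e12, e21, e22]
  rw [gridCDiff_comm p α 1 2 (f 0) i, gridCDiff_comm p α 2 0 (f 1) i,
    gridCDiff_comm p α 1 0 (f 2) i]
  have h0 := (hΔξ 0).ne'
  have h1 := (hΔξ 1).ne'
  have h2 := (hΔξ 2).ne'
  field_simp
  ring
end

section
/- Let m ∈ ℕ and let V : ℝ^m → ℝ^m and φ, ψ_1, ψ_2, ψ_3, B_1, B_2, B_3 : ℝ^m → ℝ and Φ : ℝ^m → ℝ be given. Suppose U_l, U_r ∈ ℝ^m and vectors Ũ, F̃_1, F̃_2, F̃_3 ∈ ℝ^m satisfy (V(U_r) − V(U_l))·Ũ = φ(U_r) − φ(U_l), and (V(U_r) − V(U_l))·F̃_j = (ψ_j(U_r) − ψ_j(U_l)) − (1/2)(B_j(U_l)+B_j(U_r))·(Φ(V(U_r)) − Φ(V(U_l))) for j = 1,2,3. Then for any metric 4-vectors n_l = (n_{t,l}, n_{1,l}, n_{2,l}, n_{3,l}) and n_r = (n_{t,r}, n_{1,r}, n_{2,r},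 n_{3,r}) in ℝ⁴, the curvilinear flux F̃ := (1/2)(n_{t,l}+n_{t,r})·Ũ + Σ_{j=1}^3 (1/2)(n_{j,l}+n_{j,r})·F̃_j satisfies the entropy conservation (EC) condition: (V(U_r) − V(U_l))·F̃ = (1/2)(n_{t,l}+n_{t,r})(φ(U_r)−φ(U_l)) + Σ_{j=1}^3 (1/2)(n_{j,l}+n_{j,r})(ψ_j(U_r)−ψ_j(U_l)) − Σ_{j=1}^3 (1/4)(n_{j,l}+n_{j,r})(B_j(U_l)+B_j(U_r))(Φ(V(U_r))−Φ(V(U_l))). -/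
open Matrix
/-- if the Cartesian building blocks `Ũ` and `F̃_j` satisfy the two-point
entropy conservation relations with respect to the entropy variables `V`, potential `φ`,
flux potentials `ψ_j`, magnetic components `B_j` and symmetrization function `Φ`, then
for any metric 4-vectors `(n_{t,l}, n_l)` and `(n_{t,r}, n_r)` the curvilinear flux
`F̃ = (1/2)(n_{t,l}+n_{t,r})·Ũ + Σ_j (1/2)(n_{j,l}+n_{j,r})·F̃_j` satisfies the entropy
conservation (EC) condition. -/
theorem curvilinear_EC_flux (m : ℕ)
    (V : (Fin m → ℝ) → (Fin m → ℝ))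
    (φ Φ : (Fin m → ℝ) → ℝ)
    (ψ B : Fin 3 → (Fin m → ℝ) → ℝ)
    (Ul Ur : Fin m → ℝ)
    (Utl : Fin m → ℝ) (Ftl : Fin 3 → Fin m → ℝ)
    (hU : (V Ur - V Ul) ⬝ᵥ Utl = φ Ur - φ Ul)
    (hFj : ∀ j : Fin 3, (V Ur - V Ul) ⬝ᵥ Ftl j =
      (ψ j Ur - ψ j Ul)
        - (1 / 2) * (B j Ul + B j Ur) * (Φ (V Ur) - Φ (V Ul))) :
    ∀ (ntl ntr : ℝ) (nl nr : Fin 3 → ℝ),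
      (V Ur - V Ul) ⬝ᵥ
          (((1 / 2) * (ntl + ntr)) • Utl
            + ∑ j : Fin 3, ((1 / 2) * (nl j + nr j)) • Ftl j)
        = (1 / 2) * (ntl + ntr) * (φ Ur - φ Ul)
          + ∑ j : Fin 3, (1 / 2) * (nl j + nr j) * (ψ j Ur - ψ j Ul)
          - ∑ j : Fin 3,
              (1 / 4) * (nl j + nr j) * (B j Ul + B j Ur) * (Φ (V Ur) - Φ (V Ul)) := by
  intro ntl ntr nl nr
  simp only [Fin.sum_univ_three, dotProduct_add, dotProduct_smul, smul_eq_mul, hU, hFj]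
  ring
end

section
/- Fix m ∈ ℕ, an integer p ≥ 1, real coefficients α_1, …, α_p, and Δξ_1, Δξ_2, Δξ_3 > 0. Let η : ℝ^m → ℝ be differentiable with entropy variables V(U) := ∇η(U) and entropy potential φ(U) := V(U)·U − η(U); let B_j, ψ_j : ℝ^m → ℝ (j = 1,2,3) be given, and let Φ : ℝ^m → ℝ be differentiable and satisfy Euler's homogeneity relation w·∇Φ(w) = Φ(w) for all w ∈ ℝ^m. For each k ∈ {1,2,3} let F̃_k(U_l,U_r,n_l,n_r) ∈ ℝ^m be a two-point flux satisfying the entropy conservation (EC) condition. Let J_i : ℝ → ℝ and U_i : ℝ → ℝ^m (i ∈ ℤ³) be differentiable in time, and let N_k(i) = (N_{k,t}(i), N_{k,1}(i), N_{k,2}(i), N_{k,3}(i)) ∈ ℝ⁴ be metric data (possibly time dependent) such that at every time: (i) the discrete surface conservation laws hold, Σ_{k=1}^3 (1/Δξ_k)·δ_k[N_{k,j}]_i = 0 for j = 1,2,3 and all i; (ii) d/dt (J_i U_i) = −Σ_{k=1}^3 (1/Δξ_k)·((F̃_k)^{2p}_{i,k,+1/2} − (F̃_k)^{2p}_{i,k,−1/2})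 − ∇Φ(V(U_i))·Σ_{k=1}^3 (1/Δξ_k)·((B̃_k)^{2p}_{i,k,+1/2} − (B̃_k)^{2p}_{i,k,−1/2}), where (F̃_k)^{2p} and (B̃_k)^{2p} are the 2p-th order combination fluxes of F̃_k and of the two-point source flux B̃_k(U_l,U_r,n_l,n_r) := Σ_{j=1}^3 (1/4)(n_{j,l}+n_{j,r})(B_j(U_l)+B_j(U_r)); (iii) d/dt J_i = −Σ_{k=1}^3 (1/Δξ_k)·δ_k[N_{k,t}]_i. Then the semi-discrete entropy identity holds: for all i ∈ ℤ³ and all times, d/dt (J_i·η(U_i)) + Σ_{k=1}^3 (1/Δξ_k)·((q̃_k)^{2p}_{i,k,+1/2} − (q̃_k)^{2p}_{i,k,−1/2}) = 0, where (q̃_k)^{2p} is the 2p-th order combination flux of the two-point numerical entropy flux q̃_k associated with F̃_k; that is, the high-order semi-discrete scheme is entropy conservative. -/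
open Matrix

/-- The `2p`-th order combination flux of a two-point flux `G` (depending on two states
and two metric 4-vectors, the latter encoded as `ℝ × (Fin 3 → ℝ)`) at interface
`(i, k, +1/2)`:
`G^{2p}_{i,k,+1/2} = Σ_{n=1}^p α_n Σ_{s=0}^{n−1} G(U_{i−s e_k}, U_{i+(n−s) e_k},
N_k(i−s e_k), N_k(i+(n−s) e_k))`. -/
noncomputable def combFlux {m : ℕ} {X : Type} [AddCommMonoid X] [Module ℝ X]
    (p : ℕ) (α : ℕ → ℝ)
    (G : (Fin m → ℝ) → (Fin m → ℝ) → (ℝ × (Fin 3 → ℝ)) → (ℝ × (Fin 3 → ℝ)) → X)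
    (Ug : (Fin 3 → ℤ) → (Fin m → ℝ)) (Ng : (Fin 3 → ℤ) → ℝ × (Fin 3 → ℝ))
    (i : Fin 3 → ℤ) (k : Fin 3) : X :=
  ∑ n ∈ Finset.Icc 1 p, α n •
    ∑ s ∈ Finset.range n,
      G (Ug (i - (s : ℤ) • gridE k)) (Ug (i + ((n : ℤ) - (s : ℤ)) • gridE k))
        (Ng (i - (s : ℤ) • gridE k)) (Ng (i + ((n : ℤ) - (s : ℤ)) • gridE k))

/-- The two-point source flux
`B̃(U_l,U_r,n_l,n_r) = Σ_j (1/4)(n_{j,l}+n_{j,r})(B_j(U_l)+B_j(U_r))`. -/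
noncomputable def sourceFlux {m : ℕ} (B : Fin 3 → (Fin m → ℝ) → ℝ) :
    (Fin m → ℝ) → (Fin m → ℝ) → (ℝ × (Fin 3 → ℝ)) → (ℝ × (Fin 3 → ℝ)) → ℝ :=
  fun Ul Ur nl nr => ∑ j : Fin 3, (1 / 4) * (nl.2 j + nr.2 j) * (B j Ul + B j Ur)

/-- The two-point numerical entropy flux associated with a two-point flux `F`. -/
noncomputable def entropyFlux {m : ℕ}
    (V : (Fin m → ℝ) → Fin m → ℝ) (φ Φ : (Fin m → ℝ) → ℝ)
    (ψ B : Fin 3 → (Fin m → ℝ) → ℝ)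
    (F : (Fin m → ℝ) → (Fin m → ℝ) → (ℝ × (Fin 3 → ℝ)) → (ℝ × (Fin 3 → ℝ)) → Fin m → ℝ) :
    (Fin m → ℝ) → (Fin m → ℝ) → (ℝ × (Fin 3 → ℝ)) → (ℝ × (Fin 3 → ℝ)) → ℝ :=
  fun Ul Ur nl nr =>
    (1 / 2) * ((V Ul + V Ur) ⬝ᵥ F Ul Ur nl nr)
      - (1 / 4) * (nl.1 + nr.1) * (φ Ul + φ Ur)
      - ∑ j : Fin 3, (1 / 4) * (nl.2 j + nr.2 j) * (ψ j Ul + ψ j Ur)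
      + ∑ j : Fin 3,
          (1 / 8) * (nl.2 j + nr.2 j) * (B j Ul + B j Ur) * (Φ (V Ul) + Φ (V Ur))


section Aux

lemma dot_sum {m : ℕ} {ι : Type*} (s : Finset ι) (v : Fin m → ℝ) (f : ι → Fin m → ℝ) :
    v ⬝ᵥ (∑ n ∈ s, f n) = ∑ n ∈ s, v ⬝ᵥ f n := by
  simp only [dotProduct, Finset.sum_apply, Finset.mul_sum]
  exact Finset.sum_comm

lemma telescope_aux {X : Type} [AddCommGroup X] (f g : ℕ → X) (n : ℕ)
    (h : ∀ s, g s = f (s + 1)) :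
    ∑ s ∈ Finset.range n, f s - ∑ s ∈ Finset.range n, g s = f 0 - f n := by
  calc ∑ s ∈ Finset.range n, f s - ∑ s ∈ Finset.range n, g s
      = ∑ s ∈ Finset.range n, (f s - f (s + 1)) := by
        rw [← Finset.sum_sub_distrib]
        exact Finset.sum_congr rfl fun s _ => by rw [h s]
    _ = f 0 - f n := Finset.sum_range_sub' f n

lemma combFlux_sub {m : ℕ} {X : Type} [AddCommGroup X] [Module ℝ X]
    (p : ℕ) (α : ℕ → ℝ)
    (G : (Fin m → ℝ) → (Fin m → ℝ) → (ℝ × (Fin 3 → ℝ)) → (ℝ × (Fin 3 → ℝ)) → X)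
    (Ug : (Fin 3 → ℤ) → (Fin m → ℝ)) (Ng : (Fin 3 → ℤ) → ℝ × (Fin 3 → ℝ))
    (i : Fin 3 → ℤ) (k : Fin 3) :
    combFlux p α G Ug Ng i k - combFlux p α G Ug Ng (i - gridE k) k =
      ∑ n ∈ Finset.Icc 1 p, α n •
        (G (Ug i) (Ug (i + (n : ℤ) • gridE k)) (Ng i) (Ng (i + (n : ℤ) • gridE k))
          - G (Ug (i - (n : ℤ) • gridE k)) (Ug i) (Ng (i - (n : ℤ) • gridE k)) (Ng i)) := by
  unfold combFlux
  rw [← Finset.sum_sub_distrib]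
  refine Finset.sum_congr rfl fun n _ => ?_
  rw [← smul_sub]
  congr 1
  have hg : ∀ s : ℕ,
      (fun s : ℕ => G (Ug (i - gridE k - (s : ℤ) • gridE k))
          (Ug (i - gridE k + ((n : ℤ) - (s : ℤ)) • gridE k))
          (Ng (i - gridE k - (s : ℤ) • gridE k))
          (Ng (i - gridE k + ((n : ℤ) - (s : ℤ)) • gridE k))) s =
      (fun s : ℕ => G (Ug (i - (s : ℤ) • gridE k))
          (Ug (i + ((n : ℤ) - (s : ℤ)) • gridE k))
          (Ng (i - (s : ℤ) • gridE k))
          (Ng (i + ((n : ℤ) - (s : ℤ)) • gridE k))) (s + 1) := by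
    intro s
    simp only
    have h1 : i - gridE k - (s : ℤ) • gridE k = i - ((s + 1 : ℕ) : ℤ) • gridE k := by
      funext l
      push_cast
      simp only [Pi.sub_apply, Pi.smul_apply, smul_eq_mul]
      ring
    have h2 : i - gridE k + ((n : ℤ) - (s : ℤ)) • gridE k
        = i + ((n : ℤ) - ((s + 1 : ℕ) : ℤ)) • gridE k := by
      funext l
      push_cast
      simp only [Pi.sub_apply, Pi.add_apply, Pi.smul_apply, smul_eq_mul]
      ring
    rw [h1, h2]
  have := telescope_aux
    (fun s : ℕ => G (Ug (i - (s : ℤ) • gridE k))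
        (Ug (i + ((n : ℤ) - (s : ℤ)) • gridE k))
        (Ng (i - (s : ℤ) • gridE k))
        (Ng (i + ((n : ℤ) - (s : ℤ)) • gridE k)))
    (fun s : ℕ => G (Ug (i - gridE k - (s : ℤ) • gridE k))
        (Ug (i - gridE k + ((n : ℤ) - (s : ℤ)) • gridE k))
        (Ng (i - gridE k - (s : ℤ) • gridE k))
        (Ng (i - gridE k + ((n : ℤ) - (s : ℤ)) • gridE k))) n hg
  simp only [Nat.cast_zero, zero_smul, sub_zero, add_zero, sub_self] at this
  exact this

lemma pair_identity {m : ℕ}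
    (V : (Fin m → ℝ) → Fin m → ℝ) (φ Φ : (Fin m → ℝ) → ℝ)
    (ψ B : Fin 3 → (Fin m → ℝ) → ℝ)
    (F : (Fin m → ℝ) → (Fin m → ℝ) → (ℝ × (Fin 3 → ℝ)) → (ℝ × (Fin 3 → ℝ)) → Fin m → ℝ)
    (Ua Ui Ub : Fin m → ℝ) (na ni nb : ℝ × (Fin 3 → ℝ))
    (h1 : (V Ub - V Ui) ⬝ᵥ F Ui Ub ni nb =
        (1 / 2) * (ni.1 + nb.1) * (φ Ub - φ Ui)
          + ∑ j : Fin 3, (1 / 2) * (ni.2 j + nb.2 j) * (ψ j Ub - ψ j Ui)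
          - ∑ j : Fin 3,
              (1 / 4) * (ni.2 j + nb.2 j) * (B j Ui + B j Ub) * (Φ (V Ub) - Φ (V Ui)))
    (h2 : (V Ui - V Ua) ⬝ᵥ F Ua Ui na ni =
        (1 / 2) * (na.1 + ni.1) * (φ Ui - φ Ua)
          + ∑ j : Fin 3, (1 / 2) * (na.2 j + ni.2 j) * (ψ j Ui - ψ j Ua)
          - ∑ j : Fin 3,
              (1 / 4) * (na.2 j + ni.2 j) * (B j Ua + B j Ui) * (Φ (V Ui) - Φ (V Ua))) :
    V Ui ⬝ᵥ F Ui Ub ni nb - V Ui ⬝ᵥ F Ua Ui na ni =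
      (entropyFlux V φ Φ ψ B F Ui Ub ni nb - entropyFlux V φ Φ ψ B F Ua Ui na ni)
        + (1 / 2) * (nb.1 - na.1) * φ Ui
        + ∑ j : Fin 3, (1 / 2) * (nb.2 j - na.2 j) * ψ j Ui
        - (sourceFlux B Ui Ub ni nb - sourceFlux B Ua Ui na ni) * Φ (V Ui) := by
  have e1 : (V Ui + V Ub) ⬝ᵥ F Ui Ub ni nb =
      2 * (V Ui ⬝ᵥ F Ui Ub ni nb) + (V Ub - V Ui) ⬝ᵥ F Ui Ub ni nb := by
    rw [add_dotProduct, sub_dotProduct]; ring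
  have e2 : (V Ua + V Ui) ⬝ᵥ F Ua Ui na ni =
      2 * (V Ui ⬝ᵥ F Ua Ui na ni) - (V Ui - V Ua) ⬝ᵥ F Ua Ui na ni := by
    rw [add_dotProduct, sub_dotProduct]; ring
  simp only [entropyFlux, sourceFlux, Fin.sum_univ_three] at h1 h2 ⊢
  rw [e1, e2, h1, h2]
  ring

lemma direction_identity {m : ℕ} (p : ℕ) (α : ℕ → ℝ)
    (V : (Fin m → ℝ) → Fin m → ℝ) (φ Φ : (Fin m → ℝ) → ℝ)
    (ψ B : Fin 3 → (Fin m → ℝ) → ℝ)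
    (F : (Fin m → ℝ) → (Fin m → ℝ) → (ℝ × (Fin 3 → ℝ)) → (ℝ × (Fin 3 → ℝ)) → Fin m → ℝ)
    (hEC : ∀ (Ul Ur : Fin m → ℝ) (nl nr : ℝ × (Fin 3 → ℝ)),
      (V Ur - V Ul) ⬝ᵥ F Ul Ur nl nr =
        (1 / 2) * (nl.1 + nr.1) * (φ Ur - φ Ul)
          + ∑ j : Fin 3, (1 / 2) * (nl.2 j + nr.2 j) * (ψ j Ur - ψ j Ul)
          - ∑ j : Fin 3,
              (1 / 4) * (nl.2 j + nr.2 j) * (B j Ul + B j Ur) * (Φ (V Ur) - Φ (V Ul)))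
    (Ug : (Fin 3 → ℤ) → Fin m → ℝ) (Ng : (Fin 3 → ℤ) → ℝ × (Fin 3 → ℝ))
    (i : Fin 3 → ℤ) (k : Fin 3) :
    V (Ug i) ⬝ᵥ (combFlux p α F Ug Ng i k - combFlux p α F Ug Ng (i - gridE k) k) =
      (combFlux p α (entropyFlux V φ Φ ψ B F) Ug Ng i k
        - combFlux p α (entropyFlux V φ Φ ψ B F) Ug Ng (i - gridE k) k)
      + gridCDiff p α k (fun w => (Ng w).1) i * φ (Ug i)
      + ∑ j : Fin 3, gridCDiff p α k (fun w => (Ng w).2 j) i * ψ j (Ug i)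
      - (combFlux p α (sourceFlux B) Ug Ng i k
          - combFlux p α (sourceFlux B) Ug Ng (i - gridE k) k) * Φ (V (Ug i)) := by
  rw [combFlux_sub, combFlux_sub, combFlux_sub, dot_sum]
  simp only [gridCDiff, Fin.sum_univ_three, Finset.mul_sum, Finset.sum_mul, smul_eq_mul]
  simp only [← Finset.sum_add_distrib, ← Finset.sum_sub_distrib]
  refine Finset.sum_congr rfl fun n _ => ?_
  have h := pair_identity V φ Φ ψ B F
    (Ug (i - (n : ℤ) • gridE k)) (Ug i) (Ug (i + (n : ℤ) • gridE k))
    (Ng (i - (n : ℤ) • gridE k)) (Ng i) (Ng (i + (n : ℤ) • gridE k))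
    (hEC (Ug i) (Ug (i + (n : ℤ) • gridE k)) (Ng i) (Ng (i + (n : ℤ) • gridE k)))
    (hEC (Ug (i - (n : ℤ) • gridE k)) (Ug i) (Ng (i - (n : ℤ) • gridE k)) (Ng i))
  simp only [Fin.sum_univ_three] at h
  simp only [dotProduct_smul, smul_eq_mul, dotProduct_sub]
  linear_combination α n * h

end Aux

/-- the high-order semi-discrete finite difference scheme built from
two-point entropy conservative fluxes, metric data satisfying the discrete surface
conservation laws, and the discrete volume conservation law, satisfies the
semi-discrete entropy identity, i.e. it is entropy conservative. -/
theorem high_order_semidiscrete_entropy_identity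
    (m p : ℕ) (hp : 1 ≤ p) (α : ℕ → ℝ)
    (Δξ : Fin 3 → ℝ) (hΔξ : ∀ k, 0 < Δξ k)
    (η : (Fin m → ℝ) → ℝ) (V : (Fin m → ℝ) → Fin m → ℝ)
    (hη : Differentiable ℝ η)
    (hV : ∀ (u : Fin m → ℝ) (y : Fin m → ℝ), fderiv ℝ η u y = V u ⬝ᵥ y)
    (φ : (Fin m → ℝ) → ℝ)
    (hφ : ∀ u, φ u = V u ⬝ᵥ u - η u)
    (B ψ : Fin 3 → (Fin m → ℝ) → ℝ)
    (Φ : (Fin m → ℝ) → ℝ) (gΦ : (Fin m → ℝ) → Fin m → ℝ)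
    (hΦ : Differentiable ℝ Φ)
    (hgΦ : ∀ (w y : Fin m → ℝ), fderiv ℝ Φ w y = gΦ w ⬝ᵥ y)
    (hEuler : ∀ w : Fin m → ℝ, w ⬝ᵥ gΦ w = Φ w)
    (Ftil : Fin 3 → (Fin m → ℝ) → (Fin m → ℝ) →
      (ℝ × (Fin 3 → ℝ)) → (ℝ × (Fin 3 → ℝ)) → Fin m → ℝ)
    (hEC : ∀ (k : Fin 3) (Ul Ur : Fin m → ℝ) (nl nr : ℝ × (Fin 3 → ℝ)),
      (V Ur - V Ul) ⬝ᵥ Ftil k Ul Ur nl nr =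
        (1 / 2) * (nl.1 + nr.1) * (φ Ur - φ Ul)
          + ∑ j : Fin 3, (1 / 2) * (nl.2 j + nr.2 j) * (ψ j Ur - ψ j Ul)
          - ∑ j : Fin 3,
              (1 / 4) * (nl.2 j + nr.2 j) * (B j Ul + B j Ur) * (Φ (V Ur) - Φ (V Ul)))
    (J : (Fin 3 → ℤ) → ℝ → ℝ) (U : (Fin 3 → ℤ) → ℝ → Fin m → ℝ)
    (hJ : ∀ i, Differentiable ℝ (J i))
    (hU : ∀ i, Differentiable ℝ (U i))
    (N : Fin 3 → (Fin 3 → ℤ) → ℝ → ℝ × (Fin 3 → ℝ))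
    (hSCL : ∀ (t : ℝ) (j : Fin 3) (i : Fin 3 → ℤ),
      ∑ k : Fin 3, (1 / Δξ k) * gridCDiff p α k (fun w => (N k w t).2 j) i = 0)
    (hScheme : ∀ (i : Fin 3 → ℤ) (t : ℝ),
      deriv (fun τ => J i τ • U i τ) t =
        -(∑ k : Fin 3, (1 / Δξ k) •
            (combFlux p α (Ftil k) (fun w => U w t) (fun w => N k w t) i k
              - combFlux p α (Ftil k) (fun w => U w t) (fun w => N k w t) (i - gridE k) k))
          - (∑ k : Fin 3, (1 / Δξ k) *
              (combFlux p α (sourceFlux B) (fun w => U w t) (fun w => N k w t) i k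
                - combFlux p α (sourceFlux B) (fun w => U w t) (fun w => N k w t)
                    (i - gridE k) k)) • gΦ (V (U i t)))
    (hVCL : ∀ (i : Fin 3 → ℤ) (t : ℝ),
      deriv (J i) t =
        -∑ k : Fin 3, (1 / Δξ k) * gridCDiff p α k (fun w => (N k w t).1) i) :
    ∀ (i : Fin 3 → ℤ) (t : ℝ),
      deriv (fun τ => J i τ * η (U i τ)) t
        + ∑ k : Fin 3, (1 / Δξ k) *
            (combFlux p α (entropyFlux V φ Φ ψ B (Ftil k))
                (fun w => U w t) (fun w => N k w t) i k
              - combFlux p α (entropyFlux V φ Φ ψ B (Ftil k))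
                  (fun w => U w t) (fun w => N k w t) (i - gridE k) k) = 0 := by
  intro i t
  have hdU : HasDerivAt (U i) (deriv (U i) t) t := (hU i t).hasDerivAt
  have hdJ : HasDerivAt (J i) (deriv (J i) t) t := (hJ i t).hasDerivAt
  have hdeta : HasDerivAt (fun τ => η (U i τ)) (V (U i t) ⬝ᵥ deriv (U i) t) t := by
    have h := (hη (U i t)).hasFDerivAt.comp_hasDerivAt t hdU
    rw [hV] at h
    exact h
  have hDeta : deriv (fun τ => J i τ * η (U i τ)) t =
      deriv (J i) t * η (U i t) + J i t * (V (U i t) ⬝ᵥ deriv (U i) t) :=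
    (hdJ.mul hdeta).deriv
  have hJU : deriv (fun τ => J i τ • U i τ) t =
      J i t • deriv (U i) t + deriv (J i) t • U i t := (hdJ.smul hdU).deriv
  have hdot := congrArg (fun w => V (U i t) ⬝ᵥ w) hJU
  simp only [dotProduct_add, dotProduct_smul, smul_eq_mul] at hdot
  have hX := congrArg (fun w => V (U i t) ⬝ᵥ w) (hScheme i t)
  simp only [dotProduct_sub, dotProduct_neg, dot_sum, dotProduct_add, dotProduct_smul,
    smul_eq_mul, hEuler, Fin.sum_univ_three] at hX
  have hK : ∀ k : Fin 3,
      V (U i t) ⬝ᵥ combFlux p α (Ftil k) (fun w => U w t) (fun w => N k w t) i k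
        - V (U i t) ⬝ᵥ combFlux p α (Ftil k) (fun w => U w t) (fun w => N k w t)
            (i - gridE k) k =
      (combFlux p α (entropyFlux V φ Φ ψ B (Ftil k)) (fun w => U w t) (fun w => N k w t) i k
        - combFlux p α (entropyFlux V φ Φ ψ B (Ftil k)) (fun w => U w t) (fun w => N k w t)
            (i - gridE k) k)
      + gridCDiff p α k (fun w => (N k w t).1) i * φ (U i t)
      + ∑ j : Fin 3, gridCDiff p α k (fun w => (N k w t).2 j) i * ψ j (U i t)
      - (combFlux p α (sourceFlux B) (fun w => U w t) (fun w => N k w t) i k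
          - combFlux p α (sourceFlux B) (fun w => U w t) (fun w => N k w t)
              (i - gridE k) k) * Φ (V (U i t)) := by
    intro k
    have h := direction_identity p α V φ Φ ψ B (Ftil k) (hEC k)
      (fun w => U w t) (fun w => N k w t) i k
    rw [dotProduct_sub] at h
    exact h
  have hK0 := hK 0
  have hK1 := hK 1
  have hK2 := hK 2
  simp only [Fin.sum_univ_three] at hK0 hK1 hK2
  have hVCL' := hVCL i t
  simp only [Fin.sum_univ_three] at hVCL'
  have hS0 := hSCL t 0 i
  have hS1 := hSCL t 1 i
  have hS2 := hSCL t 2 i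
  simp only [Fin.sum_univ_three] at hS0 hS1 hS2
  have hphi := hφ (U i t)
  simp only [Fin.sum_univ_three]
  linear_combination hDeta - hdot + hX + deriv (J i) t * hphi
    - (1 / Δξ 0) * hK0 - (1 / Δξ 1) * hK1 - (1 / Δξ 2) * hK2
    - φ (U i t) * hVCL' - ψ 0 (U i t) * hS0 - ψ 1 (U i t) * hS1 - ψ 2 (U i t) * hS2
end

section
/- Fix m ∈ ℕ, an integer p ≥ 1, real coefficients α_1, …, α_p, Δξ_1, Δξ_2, Δξ_3 > 0 and Δt > 0. Let F_1, F_2, F_3 : ℝ^m → ℝ^m, let Ũ : ℝ^m × ℝ^m → ℝ^m be consistent with the identity map, let F̃_j : ℝ^m × ℝ^m → ℝ^m be consistent with F_j for j = 1,2,3, and define the curvilinear two-point flux F̃_k(U_l,U_r,n_l,n_r) := (1/2)(n_{t,l}+n_{t,r})·Ũ(U_l,U_r) + Σ_{j=1}^3 (1/2)(n_{j,l}+n_{j,r})·F̃_j(U_l,U_r). Let B_j : ℝ^m → ℝ (j = 1,2,3), let S ∈ ℝ^m be any fixed source-coefficient vector, let N_k : ℤ³ → ℝ⁴ be metric data satisfying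 the discrete surface conservation laws Σ_{k=1}^3 (1/Δξ_k)·δ_k[N_{k,j}]_i = 0 for j = 1,2,3 and all i ∈ ℤ³, and let J_i ∈ ℝ (i ∈ ℤ³). Let U_0 ∈ ℝ^m and take the constant grid function U_i := U_0. Define the forward-Euler updates J_i^{new} := J_i − Δt·Σ_{k=1}^3 (1/Δξ_k)·δ_k[N_{k,t}]_i and W_i := J_i·U_0 − Δt·Σ_{k=1}^3 (1/Δξ_k)·((F̃_k)^{2p}_{i,k,+1/2} − (F̃_k)^{2p}_{i,k,−1/2}) − Δt·S·Σ_{k=1}^3 (1/Δξ_k)·((B̃_k)^{2p}_{i,k,+1/2} − (B̃_k)^{2p}_{i,k,−1/2}), with the combination fluxes evaluated on the constant grid function. Then W_i = J_i^{new}·U_0 for every i ∈ ℤ³; in particular, whenever J_i^{new} ≠ 0 one has W_i / J_i^{new} = U_0, i.e. the fully discrete scheme preserves free-stream (constant) states. -/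
open Matrix

/-- The curvilinear two-point flux
`F̃(U_l,U_r,n_l,n_r) = (1/2)(n_{t,l}+n_{t,r})·Ũ(U_l,U_r)
  + Σ_j (1/2)(n_{j,l}+n_{j,r})·F̃_j(U_l,U_r)`. -/
noncomputable def curvFlux {m : ℕ}
    (Util : (Fin m → ℝ) → (Fin m → ℝ) → Fin m → ℝ)
    (Ftil : Fin 3 → (Fin m → ℝ) → (Fin m → ℝ) → Fin m → ℝ) :
    (Fin m → ℝ) → (Fin m → ℝ) → (ℝ × (Fin 3 → ℝ)) → (ℝ × (Fin 3 → ℝ)) → Fin m → ℝ :=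
  fun Ul Ur nl nr =>
    ((1 / 2) * (nl.1 + nr.1)) • Util Ul Ur
      + ∑ j : Fin 3, ((1 / 2) * (nl.2 j + nr.2 j)) • Ftil j Ul Ur

/-- Auxiliary: on a constant state the combination-flux difference telescopes. -/
lemma telescope_comb {m : ℕ} {X : Type} [AddCommGroup X] [Module ℝ X]
    (p : ℕ) (α : ℕ → ℝ)
    (G : (Fin m → ℝ) → (Fin m → ℝ) → (ℝ × (Fin 3 → ℝ)) → (ℝ × (Fin 3 → ℝ)) → X)
    (h : (ℝ × (Fin 3 → ℝ)) → X) (U0 : Fin m → ℝ)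
    (hG : ∀ nl nr, G U0 U0 nl nr = h nl + h nr)
    (Ng : (Fin 3 → ℤ) → ℝ × (Fin 3 → ℝ)) (i : Fin 3 → ℤ) (k : Fin 3) :
    combFlux p α G (fun _ => U0) Ng i k - combFlux p α G (fun _ => U0) Ng (i - gridE k) k
      = ∑ n ∈ Finset.Icc 1 p, α n •
          (h (Ng (i + (n : ℤ) • gridE k)) - h (Ng (i - (n : ℤ) • gridE k))) := by
  unfold combFlux
  rw [← Finset.sum_sub_distrib]
  refine Finset.sum_congr rfl fun n _ => ?_
  rw [← smul_sub]
  congr 1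
  have e1 : ∀ s : ℕ, i - gridE k - (s : ℤ) • gridE k = i - ((s : ℤ) + 1) • gridE k := by
    intro s; rw [add_smul, one_smul]; abel
  have e2 : ∀ s : ℕ,
      i - gridE k + ((n : ℤ) - (s : ℤ)) • gridE k
        = i + ((n : ℤ) - ((s : ℤ) + 1)) • gridE k := by
    intro s; simp only [sub_smul, add_smul, one_smul]; abel
  have key := Finset.sum_range_sub'
    (fun s : ℕ => h (Ng (i - (s : ℤ) • gridE k)) + h (Ng (i + ((n : ℤ) - (s : ℤ)) • gridE k))) n
  calc (∑ s ∈ Finset.range n,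
          G U0 U0 (Ng (i - (s : ℤ) • gridE k)) (Ng (i + ((n : ℤ) - (s : ℤ)) • gridE k)))
        - ∑ s ∈ Finset.range n,
            G U0 U0 (Ng (i - gridE k - (s : ℤ) • gridE k))
              (Ng (i - gridE k + ((n : ℤ) - (s : ℤ)) • gridE k))
      = ∑ s ∈ Finset.range n,
          ((h (Ng (i - (s : ℤ) • gridE k)) + h (Ng (i + ((n : ℤ) - (s : ℤ)) • gridE k)))
            - (h (Ng (i - ((s : ℤ) + 1) • gridE k))
                + h (Ng (i + ((n : ℤ) - ((s : ℤ) + 1)) • gridE k)))) := by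
        rw [← Finset.sum_sub_distrib]
        refine Finset.sum_congr rfl fun s _ => ?_
        rw [hG, hG, e1, e2]
    _ = h (Ng (i + (n : ℤ) • gridE k)) - h (Ng (i - (n : ℤ) • gridE k)) := by
        have hc : ∀ s : ℕ, ((s : ℤ) + 1) = ((s + 1 : ℕ) : ℤ) := by intro s; push_cast; ring
        simp only [hc]
        rw [key]
        simp only [Nat.cast_zero, zero_smul, sub_zero, add_zero, sub_self]
        abel

/-- Auxiliary: the telescoped sum of an affine function of the metrics equals a
combination of central differences. -/
lemma comb_sum_eq {X : Type} [AddCommGroup X] [Module ℝ X]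
    (p : ℕ) (α : ℕ → ℝ) (u : X) (v : Fin 3 → X)
    (Ng : (Fin 3 → ℤ) → ℝ × (Fin 3 → ℝ)) (i : Fin 3 → ℤ) (k : Fin 3) :
    (∑ n ∈ Finset.Icc 1 p, α n •
        (((Ng (i + (n : ℤ) • gridE k)).1 • u
            + ∑ j : Fin 3, (Ng (i + (n : ℤ) • gridE k)).2 j • v j)
          - ((Ng (i - (n : ℤ) • gridE k)).1 • u
            + ∑ j : Fin 3, (Ng (i - (n : ℤ) • gridE k)).2 j • v j)))
      = (2 * gridCDiff p α k (fun z => (Ng z).1) i) • u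
        + ∑ j : Fin 3, (2 * gridCDiff p α k (fun z => (Ng z).2 j) i) • v j := by
  have h2 : ∀ a : (Fin 3 → ℤ) → ℝ, 2 * gridCDiff p α k a i
      = ∑ n ∈ Finset.Icc 1 p,
          α n * (a (i + (n : ℤ) • gridE k) - a (i - (n : ℤ) • gridE k)) := by
    intro a; unfold gridCDiff; ring
  simp only [h2]
  simp only [Finset.sum_smul]
  rw [Finset.sum_comm, ← Finset.sum_add_distrib]
  refine Finset.sum_congr rfl fun n _ => ?_
  have key : ((Ng (i + (n : ℤ) • gridE k)).1 • u
            + ∑ j : Fin 3, (Ng (i + (n : ℤ) • gridE k)).2 j • v j)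
          - ((Ng (i - (n : ℤ) • gridE k)).1 • u
            + ∑ j : Fin 3, (Ng (i - (n : ℤ) • gridE k)).2 j • v j)
      = ((Ng (i + (n : ℤ) • gridE k)).1 - (Ng (i - (n : ℤ) • gridE k)).1) • u
        + ∑ j : Fin 3,
            ((Ng (i + (n : ℤ) • gridE k)).2 j - (Ng (i - (n : ℤ) • gridE k)).2 j) • v j := by
    simp only [sub_smul, Finset.sum_sub_distrib]
    abel
  rw [key, smul_add, smul_smul, Finset.smul_sum]
  congr 1
  refine Finset.sum_congr rfl fun j _ => ?_
  rw [smul_smul]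

/-- the fully discrete (forward-Euler) high-order scheme built from
consistent two-point fluxes and metric data satisfying the discrete surface
conservation laws preserves free-stream (constant) states. -/
theorem free_stream_preservation
    (m p : ℕ) (hp : 1 ≤ p) (α : ℕ → ℝ)
    (Δξ : Fin 3 → ℝ) (hΔξ : ∀ k, 0 < Δξ k)
    (Δt : ℝ) (hΔt : 0 < Δt)
    (F : Fin 3 → (Fin m → ℝ) → Fin m → ℝ)
    (Util : (Fin m → ℝ) → (Fin m → ℝ) → Fin m → ℝ)
    (Ftil : Fin 3 → (Fin m → ℝ) → (Fin m → ℝ) → Fin m → ℝ)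
    (hUcons : ∀ a, Util a a = a)
    (hFcons : ∀ j a, Ftil j a a = F j a)
    (B : Fin 3 → (Fin m → ℝ) → ℝ)
    (S : Fin m → ℝ)
    (N : Fin 3 → (Fin 3 → ℤ) → ℝ × (Fin 3 → ℝ))
    (hSCL : ∀ (j : Fin 3) (i : Fin 3 → ℤ),
      ∑ k : Fin 3, (1 / Δξ k) * gridCDiff p α k (fun z => (N k z).2 j) i = 0)
    (J : (Fin 3 → ℤ) → ℝ) (U0 : Fin m → ℝ)
    (Jnew : (Fin 3 → ℤ) → ℝ)
    (hJnew : ∀ i, Jnew i =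
      J i - Δt * ∑ k : Fin 3, (1 / Δξ k) * gridCDiff p α k (fun z => (N k z).1) i)
    (W : (Fin 3 → ℤ) → Fin m → ℝ)
    (hW : ∀ i, W i =
      J i • U0
        - Δt • (∑ k : Fin 3, (1 / Δξ k) •
            (combFlux p α (curvFlux Util Ftil) (fun _ => U0) (N k) i k
              - combFlux p α (curvFlux Util Ftil) (fun _ => U0) (N k) (i - gridE k) k))
        - (Δt * ∑ k : Fin 3, (1 / Δξ k) *
            (combFlux p α (sourceFlux B) (fun _ => U0) (N k) i k
              - combFlux p α (sourceFlux B) (fun _ => U0) (N k) (i - gridE k) k)) • S) :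
    (∀ i : Fin 3 → ℤ, W i = Jnew i • U0) ∧
    (∀ i : Fin 3 → ℤ, Jnew i ≠ 0 → (Jnew i)⁻¹ • W i = U0) := by
  -- the affine data describing the two fluxes on the constant state
  set uc : Fin m → ℝ := ((1 : ℝ) / 2) • U0 with huc
  set vc : Fin 3 → Fin m → ℝ := fun j => ((1 : ℝ) / 2) • F j U0 with hvc
  set vs : Fin 3 → ℝ := fun j => (1 / 2) * B j U0 with hvs
  have hGc : ∀ nl nr : ℝ × (Fin 3 → ℝ),
      curvFlux Util Ftil U0 U0 nl nr
        = (nl.1 • uc + ∑ j : Fin 3, nl.2 j • vc j)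
          + (nr.1 • uc + ∑ j : Fin 3, nr.2 j • vc j) := by
    intro nl nr
    unfold curvFlux
    simp only [hUcons, hFcons, huc, hvc]
    have hsplit : ∀ (a b : ℝ) (x : Fin m → ℝ),
        ((1 / 2) * (a + b)) • x = a • (((1 : ℝ) / 2) • x) + b • (((1 : ℝ) / 2) • x) := by
      intro a b x
      rw [smul_smul, smul_smul, ← add_smul]
      congr 1
      ring
    simp only [hsplit, Finset.sum_add_distrib]
    abel
  have hGs : ∀ nl nr : ℝ × (Fin 3 → ℝ),
      sourceFlux B U0 U0 nl nr
        = (nl.1 • (0 : ℝ) + ∑ j : Fin 3, nl.2 j • vs j)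
          + (nr.1 • (0 : ℝ) + ∑ j : Fin 3, nr.2 j • vs j) := by
    intro nl nr
    unfold sourceFlux
    simp only [smul_eq_mul, mul_zero, zero_add, hvs, ← Finset.sum_add_distrib]
    refine Finset.sum_congr rfl fun j _ => ?_
    ring
  -- the per-direction telescoped differences
  have hcurv : ∀ (k : Fin 3) (i : Fin 3 → ℤ),
      combFlux p α (curvFlux Util Ftil) (fun _ => U0) (N k) i k
        - combFlux p α (curvFlux Util Ftil) (fun _ => U0) (N k) (i - gridE k) k
      = (2 * gridCDiff p α k (fun z => (N k z).1) i) • uc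
        + ∑ j : Fin 3, (2 * gridCDiff p α k (fun z => (N k z).2 j) i) • vc j := by
    intro k i
    rw [telescope_comb p α _ (fun nn : ℝ × (Fin 3 → ℝ) =>
        nn.1 • uc + ∑ j : Fin 3, nn.2 j • vc j) U0 hGc (N k) i k]
    exact comb_sum_eq p α uc vc (N k) i k
  have hsrc : ∀ (k : Fin 3) (i : Fin 3 → ℤ),
      combFlux p α (sourceFlux B) (fun _ => U0) (N k) i k
        - combFlux p α (sourceFlux B) (fun _ => U0) (N k) (i - gridE k) k
      = ∑ j : Fin 3, (2 * gridCDiff p α k (fun z => (N k z).2 j) i) • vs j := by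
    intro k i
    rw [telescope_comb p α _ (fun nn : ℝ × (Fin 3 → ℝ) =>
        nn.1 • (0 : ℝ) + ∑ j : Fin 3, nn.2 j • vs j) U0 hGs (N k) i k]
    rw [comb_sum_eq p α (0 : ℝ) vs (N k) i k]
    rw [smul_zero, zero_add]
  have hmain : ∀ i : Fin 3 → ℤ, W i = Jnew i • U0 := by
    intro i
    rw [hW i, hJnew i]
    -- the source term vanishes
    have hs0 : (∑ k : Fin 3, (1 / Δξ k) *
        (combFlux p α (sourceFlux B) (fun _ => U0) (N k) i k
          - combFlux p α (sourceFlux B) (fun _ => U0) (N k) (i - gridE k) k)) = 0 := by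
      simp only [hsrc, smul_eq_mul, Finset.mul_sum]
      rw [Finset.sum_comm]
      refine Finset.sum_eq_zero fun j _ => ?_
      have h1 : ∀ k : Fin 3, (1 / Δξ k) * (2 * gridCDiff p α k (fun z => (N k z).2 j) i * vs j)
          = ((1 / Δξ k) * gridCDiff p α k (fun z => (N k z).2 j) i) * (2 * vs j) := by
        intro k; ring
      simp only [h1]
      rw [← Finset.sum_mul, hSCL j i, zero_mul]
    -- the flux term reduces to the time-metric difference
    have hf : (∑ k : Fin 3, (1 / Δξ k) •
        (combFlux p α (curvFlux Util Ftil) (fun _ => U0) (N k) i k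
          - combFlux p α (curvFlux Util Ftil) (fun _ => U0) (N k) (i - gridE k) k))
        = (∑ k : Fin 3, (1 / Δξ k) * gridCDiff p α k (fun z => (N k z).1) i) • U0 := by
      simp only [hcurv, smul_add, Finset.sum_add_distrib, Finset.smul_sum]
      have hz : (∑ k : Fin 3, ∑ j : Fin 3,
          (1 / Δξ k) • (2 * gridCDiff p α k (fun z => (N k z).2 j) i) • vc j) = 0 := by
        rw [Finset.sum_comm]
        refine Finset.sum_eq_zero fun j _ => ?_
        have h1 : ∀ k : Fin 3,
            (1 / Δξ k) • (2 * gridCDiff p α k (fun z => (N k z).2 j) i) • vc j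
            = ((1 / Δξ k) * gridCDiff p α k (fun z => (N k z).2 j) i) • ((2 : ℝ) • vc j) := by
          intro k
          module
        simp only [h1]
        rw [← Finset.sum_smul, hSCL j i, zero_smul]
      rw [hz, add_zero]
      rw [Finset.sum_smul]
      refine Finset.sum_congr rfl fun k _ => ?_
      rw [huc]
      module
    rw [hs0, hf, mul_zero, zero_smul, sub_zero, smul_smul, ← sub_smul]
  refine ⟨hmain, fun i h0 => ?_⟩
  rw [hmain i, inv_smul_smul₀ h0]
end

section
/- Let d, m ∈ ℕ, let F_k : ℝ^m → ℝ^m and B_k : ℝ^m → ℝ be C¹ for k = 1, …, d, let η : ℝ^m → ℝ be C¹ with entropy variables V := ∇η, let Φ : ℝ^m → ℝ be C¹ satisfying Euler's homogeneity relation w·∇Φ(w) = Φ(w) for all w ∈ ℝ^m, and let q_k : ℝ^m → ℝ be C¹ satisfying ∇q_k(U) = DF_k(U)ᵀ V(U) + Φ(V(U))·∇B_k(U) for all U ∈ ℝ^m. If U : ℝ × ℝ^d → ℝ^m is C¹ and satisfies the modified (symmetrizable) system ∂_t U + Σ_{k=1}^d ∂_{x_k}(F_k(U)) = −∇Φ(V(U))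 · Σ_{k=1}^d ∂_{x_k}(B_k(U)) pointwise (the right side being the vector ∇Φ(V(U)) ∈ ℝ^m times the scalar divergence of the B_k components), then the entropy identity holds pointwise: ∂_t (η∘U) + Σ_{k=1}^d ∂_{x_k}(q_k∘U) = 0. -/
open Matrix

/-- for the modified (symmetrizable) system with Godunov–Powell-type
source term `−∇Φ(V(U))·Σ_k ∂_{x_k}(B_k(U))`, where `Φ` satisfies Euler's homogeneity
relation `w·∇Φ(w) = Φ(w)` and the entropy fluxes satisfy
`∇q_k(U) = DF_k(U)ᵀ V(U) + Φ(V(U))·∇B_k(U)`, every C¹ solution satisfies the entropy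
identity `∂_t(η∘U) + Σ_k ∂_{x_k}(q_k∘U) = 0` pointwise. -/
theorem entropy_identity_symmetrizable_system (d m : ℕ)
    (F : Fin d → (Fin m → ℝ) → Fin m → ℝ)
    (hF : ∀ k, ContDiff ℝ 1 (F k))
    (B : Fin d → (Fin m → ℝ) → ℝ)
    (hB : ∀ k, ContDiff ℝ 1 (B k))
    (η : (Fin m → ℝ) → ℝ) (hη : ContDiff ℝ 1 η)
    (V : (Fin m → ℝ) → Fin m → ℝ)
    (hV : ∀ (u y : Fin m → ℝ), fderiv ℝ η u y = V u ⬝ᵥ y)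
    (Φ : (Fin m → ℝ) → ℝ) (hΦ : ContDiff ℝ 1 Φ)
    (gΦ : (Fin m → ℝ) → Fin m → ℝ)
    (hgΦ : ∀ (w y : Fin m → ℝ), fderiv ℝ Φ w y = gΦ w ⬝ᵥ y)
    (hEuler : ∀ w : Fin m → ℝ, w ⬝ᵥ gΦ w = Φ w)
    (q : Fin d → (Fin m → ℝ) → ℝ)
    (hq : ∀ k, ContDiff ℝ 1 (q k))
    (hcomp : ∀ (k : Fin d) (u y : Fin m → ℝ),
      fderiv ℝ (q k) u y
        = V u ⬝ᵥ fderiv ℝ (F k) u y + Φ (V u) * fderiv ℝ (B k) u y)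
    (U : ℝ × (Fin d → ℝ) → Fin m → ℝ) (hU : ContDiff ℝ 1 U)
    (hPDE : ∀ z : ℝ × (Fin d → ℝ),
      fderiv ℝ U z ((1 : ℝ), (0 : Fin d → ℝ))
        + ∑ k : Fin d,
            fderiv ℝ (fun y => F k (U y)) z ((0 : ℝ), Pi.single k (1 : ℝ))
        = -(∑ k : Fin d,
              fderiv ℝ (fun y => B k (U y)) z ((0 : ℝ), Pi.single k (1 : ℝ))) •
            gΦ (V (U z))) :
    ∀ z : ℝ × (Fin d → ℝ),
      fderiv ℝ (fun y => η (U y)) z ((1 : ℝ), (0 : Fin d → ℝ))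
        + ∑ k : Fin d,
            fderiv ℝ (fun y => q k (U y)) z ((0 : ℝ), Pi.single k (1 : ℝ)) = 0 := by

  intro z
  have hUd : DifferentiableAt ℝ U z := (hU.differentiable one_ne_zero).differentiableAt
  have hηc : ∀ w, fderiv ℝ (fun y => η (U y)) z w = V (U z) ⬝ᵥ fderiv ℝ U z w := by
    intro w
    have hc := fderiv_comp z ((hη.differentiable one_ne_zero).differentiableAt) hUd
    rw [show (fun y => η (U y)) = η ∘ U from rfl, hc]
    simp [hV]
  have hFc : ∀ (k : Fin d) w, fderiv ℝ (fun y => F k (U y)) z w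
      = fderiv ℝ (F k) (U z) (fderiv ℝ U z w) := by
    intro k w
    have hc := fderiv_comp z ((hF k).differentiable one_ne_zero).differentiableAt hUd
    rw [show (fun y => F k (U y)) = F k ∘ U from rfl, hc]; rfl
  have hBc : ∀ (k : Fin d) w, fderiv ℝ (fun y => B k (U y)) z w
      = fderiv ℝ (B k) (U z) (fderiv ℝ U z w) := by
    intro k w
    have hc := fderiv_comp z ((hB k).differentiable one_ne_zero).differentiableAt hUd
    rw [show (fun y => B k (U y)) = B k ∘ U from rfl, hc]; rfl
  have hqc : ∀ (k : Fin d) w, fderiv ℝ (fun y => q k (U y)) z w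
      = V (U z) ⬝ᵥ fderiv ℝ (fun y => F k (U y)) z w
        + Φ (V (U z)) * fderiv ℝ (fun y => B k (U y)) z w := by
    intro k w
    have hc := fderiv_comp z ((hq k).differentiable one_ne_zero).differentiableAt hUd
    rw [show (fun y => q k (U y)) = q k ∘ U from rfl, hc]
    simp [hcomp, hFc, hBc]
  rw [hηc]
  have hsum : ∑ k : Fin d, fderiv ℝ (fun y => q k (U y)) z ((0 : ℝ), Pi.single k (1 : ℝ))
      = V (U z) ⬝ᵥ (∑ k : Fin d, fderiv ℝ (fun y => F k (U y)) z ((0 : ℝ), Pi.single k (1 : ℝ)))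
        + Φ (V (U z)) * ∑ k : Fin d, fderiv ℝ (fun y => B k (U y)) z ((0 : ℝ), Pi.single k (1 : ℝ)) := by
    have hds : V (U z) ⬝ᵥ (∑ k : Fin d, fderiv ℝ (fun y => F k (U y)) z ((0 : ℝ), Pi.single k (1 : ℝ)))
        = ∑ k : Fin d, V (U z) ⬝ᵥ fderiv ℝ (fun y => F k (U y)) z ((0 : ℝ), Pi.single k (1 : ℝ)) := by
      simp only [dotProduct, Finset.sum_apply, Finset.mul_sum]
      exact Finset.sum_comm
    rw [hds, Finset.mul_sum, ← Finset.sum_add_distrib]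
    exact Finset.sum_congr rfl fun k _ => hqc k _
  rw [hsum, ← add_assoc, ← dotProduct_add, hPDE z]
  have : V (U z) ⬝ᵥ
      (-(∑ k : Fin d, fderiv ℝ (fun y => B k (U y)) z ((0 : ℝ), Pi.single k (1 : ℝ))) • gΦ (V (U z)))
      = -(∑ k : Fin d, fderiv ℝ (fun y => B k (U y)) z ((0 : ℝ), Pi.single k (1 : ℝ))) * Φ (V (U z)) := by
    rw [dotProduct_smul, smul_eq_mul, hEuler]
  rw [this]; ring
end

section
/- Let x = (x_1, x_2, x_3) : ℝ × ℝ³ → ℝ³, (τ, ξ) ↦ x(τ, ξ), be C². Define J(τ,ξ) := det((∂x_i/∂ξ_j)_{i,j=1}^3), the spatial cofactors (J∂ξ_k/∂x_j) := (∂x_{j+1}/∂ξ_{k+1})(∂x_{j+2}/∂ξ_{k+2}) − (∂x_{j+1}/∂ξ_{k+2})(∂x_{j+2}/∂ξ_{k+1}) with indices taken cyclically in {1,2,3}, and the temporal metrics (J∂ξ_k/∂t) := −Σ_{j=1}^3 (∂x_j/∂τ)·(J∂ξ_k/∂x_j). Then the volume conservation law holds everywhere on ℝ × ℝ³: ∂J/∂τ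 + Σ_{k=1}^3 ∂/∂ξ_k (J∂ξ_k/∂t) = 0. -/
/-- Partial derivative of `f : ℝ × ℝ³ → ℝ` with respect to the first (time-like)
variable. -/
noncomputable def pdTau (f : ℝ × (Fin 3 → ℝ) → ℝ) : ℝ × (Fin 3 → ℝ) → ℝ :=
  fun z => fderiv ℝ f z ((1 : ℝ), (0 : Fin 3 → ℝ))

/-- Partial derivative of `f : ℝ × ℝ³ → ℝ` in the `k`-th spatial coordinate
direction. -/
noncomputable def pdXi (k : Fin 3) (f : ℝ × (Fin 3 → ℝ) → ℝ) : ℝ × (Fin 3 → ℝ) → ℝ :=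
  fun z => fderiv ℝ f z ((0 : ℝ), Pi.single k (1 : ℝ))

section helpers

variable {E : Type*} [NormedAddCommGroup E] [NormedSpace ℝ E]

theorem pd_contDiff (f : E → ℝ) (hf : ContDiff ℝ 2 f) (v : E) :
    ContDiff ℝ 1 (fun z => fderiv ℝ f z v) :=
  (ContinuousLinearMap.apply ℝ ℝ v).contDiff.comp (hf.fderiv_right (by norm_num))

theorem pd_swap (f : E → ℝ) (hf : ContDiff ℝ 2 f) (v w : E) (z : E) :
    fderiv ℝ (fun y => fderiv ℝ f y v) z w = fderiv ℝ (fun y => fderiv ℝ f y w) z v := by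
  have hd : Differentiable ℝ f := hf.differentiable (by norm_num)
  have hf' : Differentiable ℝ (fderiv ℝ f) :=
    (hf.fderiv_right (n := 2) (m := 1) (by norm_num)).differentiable (by norm_num)
  have key : ∀ u : E, fderiv ℝ (fun y => fderiv ℝ f y u) z =
      (fderiv ℝ (fderiv ℝ f) z).flip u := by
    intro u
    have h1 : HasFDerivAt (fderiv ℝ f) (fderiv ℝ (fderiv ℝ f) z) z :=
      (hf'.differentiableAt).hasFDerivAt
    exact ((ContinuousLinearMap.apply ℝ ℝ u).hasFDerivAt.comp z h1).fderiv
  rw [key v, key w]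
  simp only [ContinuousLinearMap.flip_apply]
  exact second_derivative_symmetric (fun y => (hd y).hasFDerivAt)
    (hf'.differentiableAt).hasFDerivAt w v

theorem pd_mul {f g : E → ℝ} {z : E} (hf : DifferentiableAt ℝ f z)
    (hg : DifferentiableAt ℝ g z) (v : E) :
    fderiv ℝ (fun w => f w * g w) z v = fderiv ℝ f z v * g z + f z * fderiv ℝ g z v := by
  rw [fderiv_fun_mul hf hg]
  simp only [ContinuousLinearMap.add_apply, ContinuousLinearMap.smul_apply, smul_eq_mul]
  ring

theorem pd_add {f g : E → ℝ} {z : E} (hf : DifferentiableAt ℝ f z)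
    (hg : DifferentiableAt ℝ g z) (v : E) :
    fderiv ℝ (fun w => f w + g w) z v = fderiv ℝ f z v + fderiv ℝ g z v := by
  rw [fderiv_fun_add hf hg]; simp

theorem pd_sub {f g : E → ℝ} {z : E} (hf : DifferentiableAt ℝ f z)
    (hg : DifferentiableAt ℝ g z) (v : E) :
    fderiv ℝ (fun w => f w - g w) z v = fderiv ℝ f z v - fderiv ℝ g z v := by
  rw [fderiv_fun_sub hf hg]; simp

theorem pd_neg {f : E → ℝ} {z : E} (v : E) :
    fderiv ℝ (fun w => -f w) z v = -fderiv ℝ f z v := by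
  rw [fderiv_fun_neg]; simp

end helpers

/-- the volume conservation law. For a C² time-dependent coordinate
transformation `x = x(τ, ξ)` with Jacobian determinant `J`, spatial cofactors
`A k j = J∂ξ_k/∂x_j` and temporal metrics `Nt k = J∂ξ_k/∂t = −Σ_j (∂x_j/∂τ)·A k j`,
one has `∂J/∂τ + Σ_k ∂/∂ξ_k (J∂ξ_k/∂t) = 0` everywhere. -/
theorem volume_conservation_law
    (x : ℝ × (Fin 3 → ℝ) → Fin 3 → ℝ) (hx : ContDiff ℝ 2 x)
    (J : ℝ × (Fin 3 → ℝ) → ℝ)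
    (hJ : ∀ z, J z = Matrix.det (Matrix.of fun i j : Fin 3 =>
      pdXi j (fun v => x v i) z))
    (A : Fin 3 → Fin 3 → ℝ × (Fin 3 → ℝ) → ℝ)
    (hA : ∀ (k j : Fin 3) (z : ℝ × (Fin 3 → ℝ)), A k j z =
      pdXi (k + 1) (fun v => x v (j + 1)) z * pdXi (k + 2) (fun v => x v (j + 2)) z
        - pdXi (k + 2) (fun v => x v (j + 1)) z * pdXi (k + 1) (fun v => x v (j + 2)) z)
    (Nt : Fin 3 → ℝ × (Fin 3 → ℝ) → ℝ)
    (hNt : ∀ (k : Fin 3) (z : ℝ × (Fin 3 → ℝ)), Nt k z =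
      -∑ j : Fin 3, pdTau (fun v => x v j) z * A k j z) :
    ∀ z : ℝ × (Fin 3 → ℝ), pdTau J z + ∑ k : Fin 3, pdXi k (Nt k) z = 0 := by
  intro z
  have hX : ∀ i : Fin 3, ContDiff ℝ 2 (fun v => x v i) := fun i => contDiff_pi.1 hx i
  have hPd : ∀ (i k : Fin 3) (w : ℝ × (Fin 3 → ℝ)),
      DifferentiableAt ℝ (pdXi k (fun v => x v i)) w := fun i k w =>
    ((pd_contDiff _ (hX i) _).differentiable (by norm_num)).differentiableAt
  have hQd : ∀ (i : Fin 3) (w : ℝ × (Fin 3 → ℝ)),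
      DifferentiableAt ℝ (pdTau (fun v => x v i)) w := fun i w =>
    ((pd_contDiff _ (hX i) _).differentiable (by norm_num)).differentiableAt
  have sPP : ∀ (i k l : Fin 3),
      fderiv ℝ (pdXi k (fun v => x v i)) z ((0 : ℝ), Pi.single l (1 : ℝ)) =
      fderiv ℝ (pdXi l (fun v => x v i)) z ((0 : ℝ), Pi.single k (1 : ℝ)) :=
    fun i k l => pd_swap _ (hX i) _ _ z
  have sPQ : ∀ (i k : Fin 3),
      fderiv ℝ (pdXi k (fun v => x v i)) z ((1 : ℝ), (0 : Fin 3 → ℝ)) =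
      fderiv ℝ (pdTau (fun v => x v i)) z ((0 : ℝ), Pi.single k (1 : ℝ)) :=
    fun i k => pd_swap _ (hX i) _ _ z
  have hJfun : J = fun w =>
      pdXi 0 (fun v => x v 0) w * pdXi 1 (fun v => x v 1) w * pdXi 2 (fun v => x v 2) w -
      pdXi 0 (fun v => x v 0) w * pdXi 2 (fun v => x v 1) w * pdXi 1 (fun v => x v 2) w -
      pdXi 1 (fun v => x v 0) w * pdXi 0 (fun v => x v 1) w * pdXi 2 (fun v => x v 2) w +
      pdXi 1 (fun v => x v 0) w * pdXi 2 (fun v => x v 1) w * pdXi 0 (fun v => x v 2) w +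
      pdXi 2 (fun v => x v 0) w * pdXi 0 (fun v => x v 1) w * pdXi 1 (fun v => x v 2) w -
      pdXi 2 (fun v => x v 0) w * pdXi 1 (fun v => x v 1) w * pdXi 0 (fun v => x v 2) w := by
    funext w
    rw [hJ w, Matrix.det_fin_three]
    simp only [Matrix.of_apply]
  have hNt0 : Nt 0 = fun w =>
      -(pdTau (fun v => x v 0) w *
          (pdXi 1 (fun v => x v 1) w * pdXi 2 (fun v => x v 2) w -
           pdXi 2 (fun v => x v 1) w * pdXi 1 (fun v => x v 2) w) +
        pdTau (fun v => x v 1) w *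
          (pdXi 1 (fun v => x v 2) w * pdXi 2 (fun v => x v 0) w -
           pdXi 2 (fun v => x v 2) w * pdXi 1 (fun v => x v 0) w) +
        pdTau (fun v => x v 2) w *
          (pdXi 1 (fun v => x v 0) w * pdXi 2 (fun v => x v 1) w -
           pdXi 2 (fun v => x v 0) w * pdXi 1 (fun v => x v 1) w)) := by
    funext w
    rw [hNt 0 w, Fin.sum_univ_three, hA 0 0 w, hA 0 1 w, hA 0 2 w]
    simp only [Fin.reduceAdd]
  have hNt1 : Nt 1 = fun w =>
      -(pdTau (fun v => x v 0) w *
          (pdXi 2 (fun v => x v 1) w * pdXi 0 (fun v => x v 2) w -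
           pdXi 0 (fun v => x v 1) w * pdXi 2 (fun v => x v 2) w) +
        pdTau (fun v => x v 1) w *
          (pdXi 2 (fun v => x v 2) w * pdXi 0 (fun v => x v 0) w -
           pdXi 0 (fun v => x v 2) w * pdXi 2 (fun v => x v 0) w) +
        pdTau (fun v => x v 2) w *
          (pdXi 2 (fun v => x v 0) w * pdXi 0 (fun v => x v 1) w -
           pdXi 0 (fun v => x v 0) w * pdXi 2 (fun v => x v 1) w)) := by
    funext w
    rw [hNt 1 w, Fin.sum_univ_three, hA 1 0 w, hA 1 1 w, hA 1 2 w]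
    simp only [Fin.reduceAdd]
  have hNt2 : Nt 2 = fun w =>
      -(pdTau (fun v => x v 0) w *
          (pdXi 0 (fun v => x v 1) w * pdXi 1 (fun v => x v 2) w -
           pdXi 1 (fun v => x v 1) w * pdXi 0 (fun v => x v 2) w) +
        pdTau (fun v => x v 1) w *
          (pdXi 0 (fun v => x v 2) w * pdXi 1 (fun v => x v 0) w -
           pdXi 1 (fun v => x v 2) w * pdXi 0 (fun v => x v 0) w) +
        pdTau (fun v => x v 2) w *
          (pdXi 0 (fun v => x v 0) w * pdXi 1 (fun v => x v 1) w -
           pdXi 1 (fun v => x v 0) w * pdXi 0 (fun v => x v 1) w)) := by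
    funext w
    rw [hNt 2 w, Fin.sum_univ_three, hA 2 0 w, hA 2 1 w, hA 2 2 w]
    simp only [Fin.reduceAdd]
  rw [Fin.sum_univ_three]
  show fderiv ℝ J z ((1:ℝ), (0 : Fin 3 → ℝ)) +
      (fderiv ℝ (Nt 0) z ((0:ℝ), Pi.single 0 (1:ℝ)) +
       fderiv ℝ (Nt 1) z ((0:ℝ), Pi.single 1 (1:ℝ)) +
       fderiv ℝ (Nt 2) z ((0:ℝ), Pi.single 2 (1:ℝ))) = 0
  rw [hJfun, hNt0, hNt1, hNt2]
  simp (disch := fun_prop) only [pd_mul, pd_add, pd_sub, pd_neg]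
  rw [sPQ 0 0, sPQ 0 1, sPQ 0 2, sPQ 1 0, sPQ 1 1, sPQ 1 2, sPQ 2 0, sPQ 2 1, sPQ 2 2,
    sPP 0 1 0, sPP 0 2 0, sPP 0 2 1, sPP 1 1 0, sPP 1 2 0, sPP 1 2 1,
    sPP 2 1 0, sPP 2 2 0, sPP 2 2 1]
  ring
end

section
/- Let η, q_1, q_2, q_3 : ℝ × ℝ³ → ℝ be C¹ functions of (t, x) satisfying ∂_t η + Σ_{j=1}^3 ∂_{x_j} q_j = 0 everywhere on ℝ × ℝ³. Let x = (x_1, x_2, x_3) : ℝ × ℝ³ → ℝ³, (τ, ξ) ↦ x(τ, ξ), be C², and define J(τ,ξ) := det((∂x_i/∂ξ_j)), the spatial cofactors (J∂ξ_k/∂x_j) := (∂x_{j+1}/∂ξ_{k+1})(∂x_{j+2}/∂ξ_{k+2}) − (∂x_{j+1}/∂ξ_{k+2})(∂x_{j+2}/∂ξ_{k+1}) (indices cyclic in {1,2,3}), and (J∂ξ_k/∂t) := −Σ_{j=1}^3 (∂x_j/∂τ)·(J∂ξ_k/∂x_j). Define the composed functions η̃(τ,ξ) := η(τ, x(τ,ξ))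 and q̃_j(τ,ξ) := q_j(τ, x(τ,ξ)). Then the entropy identity in curvilinear coordinates holds everywhere: ∂/∂τ (J·η̃) + Σ_{k=1}^3 ∂/∂ξ_k [ (J∂ξ_k/∂t)·η̃ + Σ_{j=1}^3 (J∂ξ_k/∂x_j)·q̃_j ] = 0. -/
/-- Partial derivative of `f : ℝ × ℝ³ → ℝ` with respect to the first (time-like)
variable. -/
noncomputable def pdT (f : ℝ × (Fin 3 → ℝ) → ℝ) : ℝ × (Fin 3 → ℝ) → ℝ :=
  fun z => fderiv ℝ f z ((1 : ℝ), (0 : Fin 3 → ℝ))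

/-- Partial derivative of `f : ℝ × ℝ³ → ℝ` in the `k`-th coordinate direction of the
second factor. -/
noncomputable def pdX (k : Fin 3) (f : ℝ × (Fin 3 → ℝ) → ℝ) : ℝ × (Fin 3 → ℝ) → ℝ :=
  fun z => fderiv ℝ f z ((0 : ℝ), Pi.single k (1 : ℝ))

abbrev E3 := ℝ × (Fin 3 → ℝ)

variable {f g : E3 → ℝ} {z : E3} {k : Fin 3}

lemma pdT_mul (hf : DifferentiableAt ℝ f z) (hg : DifferentiableAt ℝ g z) :
    pdT (fun v => f v * g v) z = pdT f z * g z + f z * pdT g z := by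
  simp only [pdT, fderiv_fun_mul hf hg, ContinuousLinearMap.add_apply, ContinuousLinearMap.smul_apply,
    smul_eq_mul]
  ring

lemma pdX_mul (hf : DifferentiableAt ℝ f z) (hg : DifferentiableAt ℝ g z) :
    pdX k (fun v => f v * g v) z = pdX k f z * g z + f z * pdX k g z := by
  simp only [pdX, fderiv_fun_mul hf hg, ContinuousLinearMap.add_apply, ContinuousLinearMap.smul_apply,
    smul_eq_mul]
  ring

lemma pdT_add (hf : DifferentiableAt ℝ f z) (hg : DifferentiableAt ℝ g z) :
    pdT (fun v => f v + g v) z = pdT f z + pdT g z := by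
  simp [pdT, fderiv_fun_add hf hg]

lemma pdX_add (hf : DifferentiableAt ℝ f z) (hg : DifferentiableAt ℝ g z) :
    pdX k (fun v => f v + g v) z = pdX k f z + pdX k g z := by
  simp [pdX, fderiv_fun_add hf hg]

lemma pdT_sub (hf : DifferentiableAt ℝ f z) (hg : DifferentiableAt ℝ g z) :
    pdT (fun v => f v - g v) z = pdT f z - pdT g z := by
  simp [pdT, fderiv_fun_sub hf hg]

lemma pdX_sub (hf : DifferentiableAt ℝ f z) (hg : DifferentiableAt ℝ g z) :
    pdX k (fun v => f v - g v) z = pdX k f z - pdX k g z := by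
  simp [pdX, fderiv_fun_sub hf hg]

lemma pdT_neg : pdT (fun v => -f v) z = -pdT f z := by
  simp [pdT, fderiv_neg]

lemma pdX_neg : pdX k (fun v => -f v) z = -pdX k f z := by
  simp [pdX, fderiv_neg]

lemma contDiff_pd (hf : ContDiff ℝ 2 f) (c : E3) :
    ContDiff ℝ 1 (fun z => fderiv ℝ f z c) :=
  (hf.fderiv_right le_rfl).clm_apply contDiff_const

lemma clm_decomp (φ : E3 →L[ℝ] ℝ) (s : ℝ) (u : Fin 3 → ℝ) :
    φ (s, u) = s * φ (1, 0) + ∑ i, u i * φ (0, Pi.single i 1) := by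
  have h : (s, u) = s • ((1:ℝ), (0 : Fin 3 → ℝ)) + ∑ i, u i • (((0:ℝ), Pi.single i (1:ℝ)) : E3) := by
    apply Prod.ext
    · simp [Prod.fst_sum]
    · simp only [Prod.snd_add, Prod.smul_snd, Prod.snd_sum, smul_zero]
      rw [zero_add]
      simp only [← Pi.single_smul, smul_eq_mul, mul_one]
      exact (Finset.univ_sum_single u).symm
  rw [h, map_add, map_smul, map_sum]
  simp only [smul_eq_mul]
  congr 1
  refine Finset.sum_congr rfl fun i _ => ?_
  rw [map_smul, smul_eq_mul]

variable {x : E3 → Fin 3 → ℝ}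

lemma fderiv_comp_x (hf : ContDiff ℝ 1 f) (hx1 : ContDiff ℝ 1 x) (z : E3) (c : E3) :
    fderiv ℝ (fun v => f (v.1, x v)) z c =
      c.1 * pdT f (z.1, x z) + ∑ i, fderiv ℝ (fun v => x v i) z c * pdX i f (z.1, x z) := by
  have hxd : DifferentiableAt ℝ x z := (hx1.differentiable one_ne_zero) z
  have hg : HasFDerivAt (fun v : E3 => (v.1, x v))
      ((ContinuousLinearMap.fst ℝ ℝ (Fin 3 → ℝ)).prod (fderiv ℝ x z)) z :=
    HasFDerivAt.prodMk (hasFDerivAt_fst) hxd.hasFDerivAt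
  have hfd : HasFDerivAt f (fderiv ℝ f (z.1, x z)) (z.1, x z) :=
    ((hf.differentiable one_ne_zero) (z.1, x z)).hasFDerivAt
  have hcomp : HasFDerivAt (fun v => f (v.1, x v))
      ((fderiv ℝ f (z.1, x z)).comp
        ((ContinuousLinearMap.fst ℝ ℝ (Fin 3 → ℝ)).prod (fderiv ℝ x z))) z := hfd.comp z hg
  rw [hcomp.fderiv]
  have hxi : ∀ i, fderiv ℝ (fun v => x v i) z c = fderiv ℝ x z c i := by
    intro i
    have hp0 := (ContinuousLinearMap.proj (R := ℝ) (φ := fun _ : Fin 3 => ℝ) i).hasFDerivAt.comp z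
      hxd.hasFDerivAt
    have hp : HasFDerivAt (fun v => x v i)
        ((ContinuousLinearMap.proj i).comp (fderiv ℝ x z)) z :=
      hp0.congr_of_eventuallyEq (Filter.Eventually.of_forall fun v => rfl)
    rw [hp.fderiv]; rfl
  simp only [hxi]
  rw [ContinuousLinearMap.comp_apply]
  have : ((ContinuousLinearMap.fst ℝ ℝ (Fin 3 → ℝ)).prod (fderiv ℝ x z)) c
      = (c.1, fderiv ℝ x z c) := rfl
  rw [this, clm_decomp]
  rfl

lemma pdT_comp (hf : ContDiff ℝ 1 f) (hx1 : ContDiff ℝ 1 x) (z : E3) :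
    pdT (fun v => f (v.1, x v)) z =
      pdT f (z.1, x z) + ∑ i, pdT (fun v => x v i) z * pdX i f (z.1, x z) := by
  have := fderiv_comp_x hf hx1 z ((1 : ℝ), (0 : Fin 3 → ℝ))
  simpa [pdT, pdX] using this

lemma pdX_comp (hf : ContDiff ℝ 1 f) (hx1 : ContDiff ℝ 1 x) (z : E3) (k : Fin 3) :
    pdX k (fun v => f (v.1, x v)) z =
      ∑ i, pdX k (fun v => x v i) z * pdX i f (z.1, x z) := by
  have := fderiv_comp_x hf hx1 z ((0 : ℝ), Pi.single k (1 : ℝ))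
  simpa [pdT, pdX] using this

lemma pd_comm (hg : ContDiff ℝ 2 g) (z a b : E3) :
    fderiv ℝ (fun y => fderiv ℝ g y a) z b = fderiv ℝ (fun y => fderiv ℝ g y b) z a := by
  have hd : DifferentiableAt ℝ (fderiv ℝ g) z :=
    ((hg.fderiv_right le_rfl).differentiable one_ne_zero) z
  have h1 : ∀ c : E3, fderiv ℝ (fun y => fderiv ℝ g y c) z
      = (ContinuousLinearMap.apply ℝ ℝ c).comp (fderiv ℝ (fderiv ℝ g) z) := by
    intro c
    exact ((ContinuousLinearMap.apply ℝ ℝ c).hasFDerivAt.comp z hd.hasFDerivAt).fderiv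
  rw [h1 a, h1 b]
  exact second_derivative_symmetric
    (fun y => ((hg.differentiable two_ne_zero) y).hasFDerivAt) hd.hasFDerivAt b a

lemma pdXT_comm (hg : ContDiff ℝ 2 g) (z : E3) (k : Fin 3) :
    pdX k (pdT g) z = pdT (pdX k g) z :=
  pd_comm hg z _ _

lemma pdXX_comm (hg : ContDiff ℝ 2 g) (z : E3) (k j : Fin 3) :
    pdX k (pdX j g) z = pdX j (pdX k g) z :=
  pd_comm hg z _ _

set_option maxHeartbeats 4000000 in
/-- the entropy identity transforms to curvilinear coordinates. If the
C¹ functions `η, q_j` of `(t, x)` satisfy `∂_t η + Σ_j ∂_{x_j} q_j = 0`, and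
`x = x(τ, ξ)` is a C² time-dependent coordinate transformation with Jacobian `J`,
spatial cofactors `A k j = J∂ξ_k/∂x_j` and temporal metrics
`Nt k = −Σ_j (∂x_j/∂τ)·A k j`, then
`∂_τ(J·η̃) + Σ_k ∂_{ξ_k}[Nt_k·η̃ + Σ_j A_{kj}·q̃_j] = 0` everywhere, where
`η̃(τ,ξ) = η(τ, x(τ,ξ))` and `q̃_j(τ,ξ) = q_j(τ, x(τ,ξ))`. -/
theorem entropy_identity_curvilinear
    (η : ℝ × (Fin 3 → ℝ) → ℝ) (q : Fin 3 → ℝ × (Fin 3 → ℝ) → ℝ)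
    (hη : ContDiff ℝ 1 η) (hq : ∀ j, ContDiff ℝ 1 (q j))
    (hPDE : ∀ z : ℝ × (Fin 3 → ℝ), pdT η z + ∑ j : Fin 3, pdX j (q j) z = 0)
    (x : ℝ × (Fin 3 → ℝ) → Fin 3 → ℝ) (hx : ContDiff ℝ 2 x)
    (J : ℝ × (Fin 3 → ℝ) → ℝ)
    (hJ : ∀ z, J z = Matrix.det (Matrix.of fun i j : Fin 3 =>
      pdX j (fun v => x v i) z))
    (A : Fin 3 → Fin 3 → ℝ × (Fin 3 → ℝ) → ℝ)
    (hA : ∀ (k j : Fin 3) (z : ℝ × (Fin 3 → ℝ)), A k j z =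
      pdX (k + 1) (fun v => x v (j + 1)) z * pdX (k + 2) (fun v => x v (j + 2)) z
        - pdX (k + 2) (fun v => x v (j + 1)) z * pdX (k + 1) (fun v => x v (j + 2)) z)
    (Nt : Fin 3 → ℝ × (Fin 3 → ℝ) → ℝ)
    (hNt : ∀ (k : Fin 3) (z : ℝ × (Fin 3 → ℝ)), Nt k z =
      -∑ j : Fin 3, pdT (fun v => x v j) z * A k j z) :
    ∀ z : ℝ × (Fin 3 → ℝ),
      pdT (fun v => J v * η (v.1, x v)) z
        + ∑ k : Fin 3,
            pdX k (fun v =>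
              Nt k v * η (v.1, x v) + ∑ j : Fin 3, A k j v * q j (v.1, x v)) z = 0 := by
  intro z
  have hx1 : ContDiff ℝ 1 x := hx.of_le one_le_two
  have hXc : ∀ i : Fin 3, ContDiff ℝ 2 (fun v => x v i) := fun i => contDiff_pi.mp hx i
  have hu : ∀ (j i : Fin 3), Differentiable ℝ (pdX j (fun v => x v i)) := fun j i =>
    (contDiff_pd (hXc i) _).differentiable one_ne_zero
  have hw : ∀ i : Fin 3, Differentiable ℝ (pdT (fun v => x v i)) := fun i =>
    (contDiff_pd (hXc i) _).differentiable one_ne_zero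
  have hηd : Differentiable ℝ η := hη.differentiable one_ne_zero
  have hqd : ∀ j, Differentiable ℝ (q j) := fun j => (hq j).differentiable one_ne_zero
  have hxd : Differentiable ℝ x := hx1.differentiable one_ne_zero
  simp only [hJ, hNt, hA, Matrix.det_fin_three, Matrix.of_apply, Fin.sum_univ_three,
    Fin.isValue, Fin.reduceAdd]
  simp (disch := fun_prop) only [pdT_mul, pdX_mul, pdT_add, pdX_add, pdT_sub, pdX_sub,
    pdT_neg, pdX_neg]
  simp only [pdT_comp hη hx1, pdX_comp hη hx1, pdX_comp (hq 0) hx1, pdX_comp (hq 1) hx1,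
    pdX_comp (hq 2) hx1, Fin.sum_univ_three]
  simp only [pdXT_comm (hXc 0), pdXT_comm (hXc 1), pdXT_comm (hXc 2)]
  have s10 : ∀ i : Fin 3, pdX 1 (pdX 0 (fun v => x v i)) z = pdX 0 (pdX 1 (fun v => x v i)) z :=
    fun i => pdXX_comm (hXc i) z 1 0
  have s20 : ∀ i : Fin 3, pdX 2 (pdX 0 (fun v => x v i)) z = pdX 0 (pdX 2 (fun v => x v i)) z :=
    fun i => pdXX_comm (hXc i) z 2 0
  have s21 : ∀ i : Fin 3, pdX 2 (pdX 1 (fun v => x v i)) z = pdX 1 (pdX 2 (fun v => x v i)) z :=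
    fun i => pdXX_comm (hXc i) z 2 1
  simp only [s10, s20, s21]
  have hp := hPDE (z.1, x z)
  rw [Fin.sum_univ_three] at hp
  have hηt : pdT η (z.1, x z) = -pdX 0 (q 0) (z.1, x z) - pdX 1 (q 1) (z.1, x z)
      - pdX 2 (q 2) (z.1, x z) := by linarith
  rw [hηt]
  ring
end
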